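/- Let M ≥ 1 and let ω : (ZMod M)³ → kˣ be any normalized 3-cocycle. Then there exist a unique ζ ∈ kˣ with ζ^M = 1 and a normalized 2-cochain u : (ZMod M)² → kˣ such that ω(a,b,c) = ω_ζ(a,b,c)·u(b,c)·u(a+b,c)⁻¹·u(a,b+c)·u(a,b)⁻¹ for all a,b,c ∈ ZMod M. (Thus the assignment ζ ↦ [ω_ζ] gives an isomorphism between the group of M-th roots of unity in k and H³(ℤ_M, kˣ).) -/

import Mathlib

/-- The 3-cocycle `ω_ζ` on `ZMod M` attached to an `M`-th root of unity `ζ`. -/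
def omegaZeta {k : Type*} [Field k] (M : ℕ) (ζ : kˣ) (a b c : ZMod M) : kˣ :=
  if M ≤ b.val + c.val then ζ ^ a.val else 1

/-!
Put `ζ := ∏ j, ω 1 j 1`. Taking the product of the cocycle identity over `b` shows that
`c ↦ ∏ j, ω a j c` is a homomorphism `ZMod M → kˣ`, so `ζ ^ M = 1`. This invariant is `ζ` for `ω_ζ`
and trivial for a coboundary, which gives uniqueness. For existence, `θ = ω / ω_ζ` has trivial
invariant, so the slice `θ 1` is the coboundary at `a = 1` of `u b c = ∏ i < b, (θ 1 i c)⁻¹`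
(the invariant is what makes `u` well defined modulo `M`). Then `θ / δu` is a normalized cocycle
that vanishes at `a = 1`, and the cocycle identity at `(1, n, b, c)` propagates this to every `a`.
-/

open Finset

section Cocycles

variable {G A : Type*} [CommGroup A]

def IsNormalizedThreeCochain [Zero G] (ω : G → G → G → A) : Prop :=
  ∀ a b c, a = 0 ∨ b = 0 ∨ c = 0 → ω a b c = 1

def IsThreeCocycle [Add G] (ω : G → G → G → A) : Prop :=
  ∀ a b c d, ω b c d * ω a (b + c) d * ω a b c = ω (a + b) c d * ω a b (c + d)

def coboundary [Add G] (u : G → G → A) (a b c : G) : A :=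
  u b c * (u (a + b) c)⁻¹ * u a (b + c) * (u a b)⁻¹

theorem isNormalizedThreeCochain_coboundary [AddZeroClass G] {u : G → G → A}
    (hu₁ : ∀ a, u a 0 = 1) (hu₂ : ∀ b, u 0 b = 1) :
    IsNormalizedThreeCochain (coboundary u) := by
  rintro a b c (rfl | rfl | rfl) <;> simp [coboundary, hu₁, hu₂]

theorem isThreeCocycle_coboundary [AddSemigroup G] (u : G → G → A) :
    IsThreeCocycle (coboundary u) := by
  intro a b c d
  apply Additive.ofMul.injective
  simp only [coboundary, add_assoc, ofMul_mul, ofMul_inv]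
  abel

theorem IsNormalizedThreeCochain.div [Zero G] {ω ω' : G → G → G → A}
    (hω : IsNormalizedThreeCochain ω) (hω' : IsNormalizedThreeCochain ω') :
    IsNormalizedThreeCochain fun a b c => ω a b c / ω' a b c := fun a b c h => by
  simp only [hω a b c h, hω' a b c h, div_one]

theorem IsThreeCocycle.div [Add G] {ω ω' : G → G → G → A}
    (hω : IsThreeCocycle ω) (hω' : IsThreeCocycle ω') :
    IsThreeCocycle fun a b c => ω a b c / ω' a b c := fun a b c d => by
  simp only [div_mul_div_comm, hω a b c d, hω' a b c d]

section Finite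

variable [AddGroup G] [Fintype G]

theorem prod_coboundary (u : G → G → A) (a c : G) : ∏ b, coboundary u a b c = 1 := by
  have h₁ : ∏ b, u (a + b) c = ∏ b, u b c := Equiv.prod_comp (Equiv.addLeft a) (u · c)
  have h₂ : ∏ b, u a (b + c) = ∏ b, u a b := Equiv.prod_comp (Equiv.addRight c) (u a)
  simp only [coboundary, prod_mul_distrib, prod_inv_distrib, h₁, h₂, mul_inv_cancel, one_mul]

theorem IsThreeCocycle.prod_apply_add {ω : G → G → G → A} (hω : IsThreeCocycle ω) (a c d : G) :
    ∏ b, ω a b (c + d) = (∏ b, ω a b c) * ∏ b, ω a b d := by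
  have h₁ : ∏ b, ω (a + b) c d = ∏ b, ω b c d := Equiv.prod_comp (Equiv.addLeft a) (ω · c d)
  have h₂ : ∏ b, ω a (b + c) d = ∏ b, ω a b d := Equiv.prod_comp (Equiv.addRight c) (ω a · d)
  have h := prod_congr rfl fun b (_ : b ∈ univ) => hω a b c d
  simp only [prod_mul_distrib, h₁, h₂, mul_assoc, mul_right_inj] at h
  rw [← h, mul_comm]

end Finite

theorem IsThreeCocycle.prod_apply_natCast [AddGroupWithOne G] [Fintype G] {ω : G → G → G → A}
    (hω : IsThreeCocycle ω) (hω₀ : IsNormalizedThreeCochain ω) (a : G) (n : ℕ) :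
    ∏ b, ω a b n = (∏ b, ω a b 1) ^ n := by
  induction n with
  | zero => simpa using prod_eq_one fun b _ => hω₀ a b 0 (by simp)
  | succ n ih => rw [Nat.cast_succ, hω.prod_apply_add, ih, pow_succ]

theorem IsThreeCocycle.apply_natCast_eq_one [AddMonoidWithOne G] {θ : G → G → G → A}
    (hθ : IsThreeCocycle θ) (hθ₀ : IsNormalizedThreeCochain θ) (h₁ : ∀ b c, θ 1 b c = 1)
    (n : ℕ) (b c : G) : θ n b c = 1 := by
  induction n with
  | zero => simpa using hθ₀ 0 b c (by simp)
  | succ n ih =>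
    have h := hθ 1 n b c
    simp only [h₁, ih, mul_one] at h
    rw [Nat.cast_succ, Nat.cast_add_one_comm, ← h]

end Cocycles

namespace ZMod

variable {M : ℕ} [NeZero M] {A : Type*} [CommGroup A]

theorem prod_range_natCast (f : ZMod M → A) : ∏ i ∈ range M, f i = ∏ j, f j :=
  prod_nbij' Nat.cast val (fun _ _ => mem_univ _) (fun a _ => mem_range.2 (val_lt a))
    (fun _ hi => val_cast_of_lt (mem_range.1 hi)) (fun a _ => natCast_zmod_val a) fun _ _ => rfl

def carry (b c : ZMod M) : ℕ := if M ≤ b.val + c.val then 1 else 0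

theorem val_add_add_mul_carry (b c : ZMod M) : (b + c).val + M * carry b c = b.val + c.val := by
  unfold carry
  split_ifs with h
  · rw [val_add_val_of_le h, mul_one]
  · rw [val_add_of_lt (not_le.1 h), mul_zero, add_zero]

theorem carry_add_add_carry (b c d : ZMod M) :
    carry (b + c) d + carry b c = carry b (c + d) + carry c d := by
  have h₁ := val_add_add_mul_carry (b + c) d
  have h₂ := val_add_add_mul_carry b c
  have h₃ := val_add_add_mul_carry b (c + d)
  have h₄ := val_add_add_mul_carry c d
  rw [add_assoc] at h₁
  apply Nat.eq_of_mul_eq_mul_left (NeZero.pos M)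
  linarith

theorem sum_carry (c : ZMod M) : ∑ b, carry b c = c.val := by
  have h := sum_congr rfl fun b (_ : b ∈ univ) => val_add_add_mul_carry b c
  have hshift : ∑ b : ZMod M, (b + c).val = ∑ b : ZMod M, b.val :=
    Equiv.sum_comp (Equiv.addRight c) val
  rw [sum_add_distrib, sum_add_distrib, hshift, ← mul_sum, sum_const, card_univ, ZMod.card,
    smul_eq_mul, add_left_cancel_iff] at h
  exact Nat.eq_of_mul_eq_mul_left (NeZero.pos M) h

end ZMod

section Cyclic

open ZMod

variable {M : ℕ} {A : Type*} [CommGroup A] {θ : ZMod M → ZMod M → ZMod M → A}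

def cyclicPrimitive (θ : ZMod M → ZMod M → ZMod M → A) (b c : ZMod M) : A :=
  ∏ i ∈ range b.val, (θ 1 i c)⁻¹

theorem cyclicPrimitive_zero_left (θ : ZMod M → ZMod M → ZMod M → A) (c : ZMod M) :
    cyclicPrimitive θ 0 c = 1 := by
  simp [cyclicPrimitive]

theorem cyclicPrimitive_zero_right (hθ₀ : IsNormalizedThreeCochain θ) (b : ZMod M) :
    cyclicPrimitive θ b 0 = 1 :=
  prod_eq_one fun i _ => by rw [hθ₀ 1 i 0 (by simp), inv_one]

theorem cyclicPrimitive_one_left (hθ₀ : IsNormalizedThreeCochain θ) (c : ZMod M) :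
    cyclicPrimitive θ 1 c = 1 := by
  refine prod_eq_one fun i hi => ?_
  obtain rfl : i = 0 := by
    have := (mem_range.1 hi).trans_le ((val_one_eq_one_mod M).trans_le (Nat.mod_le 1 M))
    omega
  rw [hθ₀ 1 _ c (by simp), inv_one]

variable [NeZero M]

theorem IsThreeCocycle.prod_apply_eq_pow_val (hθ : IsThreeCocycle θ)
    (hθ₀ : IsNormalizedThreeCochain θ) (a c : ZMod M) :
    ∏ b, θ a b c = (∏ b, θ a b 1) ^ c.val := by
  simpa only [natCast_zmod_val] using hθ.prod_apply_natCast hθ₀ a c.val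

theorem IsThreeCocycle.prod_apply_one_pow_card (hθ : IsThreeCocycle θ)
    (hθ₀ : IsNormalizedThreeCochain θ) (a : ZMod M) : (∏ b, θ a b 1) ^ M = 1 := by
  rw [← hθ.prod_apply_natCast hθ₀, natCast_self]
  exact prod_eq_one fun b _ => hθ₀ a b 0 (by simp)

theorem cyclicPrimitive_one_add (hθ : ∀ c, ∏ j, θ 1 j c = 1) (b c : ZMod M) :
    cyclicPrimitive θ (1 + b) c = (θ 1 b c)⁻¹ * cyclicPrimitive θ b c := by
  have hsucc : ∏ i ∈ range (b.val + 1), (θ 1 i c)⁻¹ = (θ 1 b c)⁻¹ * cyclicPrimitive θ b c := by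
    rw [prod_range_succ, natCast_zmod_val, mul_comm, cyclicPrimitive]
  have hcast : ((b.val + 1 : ℕ) : ZMod M) = 1 + b := by
    rw [Nat.cast_succ, natCast_zmod_val, add_comm]
  rw [← hsucc]
  rcases (show b.val + 1 ≤ M from b.val_lt).lt_or_eq with h | h
  · rw [cyclicPrimitive, ← hcast, val_cast_of_lt h]
  · rw [← hcast, h, natCast_self, cyclicPrimitive_zero_left,
      prod_range_natCast fun j => (θ 1 j c)⁻¹, prod_inv_distrib, hθ, inv_one]

theorem coboundary_cyclicPrimitive_one (hθ₀ : IsNormalizedThreeCochain θ)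
    (hθ : ∀ c, ∏ j, θ 1 j c = 1) (b c : ZMod M) :
    coboundary (cyclicPrimitive θ) 1 b c = θ 1 b c := by
  rw [coboundary, cyclicPrimitive_one_add hθ, cyclicPrimitive_one_left hθ₀,
    cyclicPrimitive_one_left hθ₀, mul_inv_rev, inv_inv, inv_one, mul_one, mul_one,
    mul_inv_cancel_left]

theorem IsThreeCocycle.exists_eq_coboundary (hθ : IsThreeCocycle θ)
    (hθ₀ : IsNormalizedThreeCochain θ) (h : ∏ j, θ 1 j 1 = 1) :
    ∃ u : ZMod M → ZMod M → A, (∀ a, u a 0 = 1) ∧ (∀ b, u 0 b = 1) ∧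
      ∀ a b c, θ a b c = coboundary u a b c := by
  have hN (c : ZMod M) : ∏ j, θ 1 j c = 1 := by
    rw [hθ.prod_apply_eq_pow_val hθ₀, h, one_pow]
  have hu₁ := cyclicPrimitive_zero_right hθ₀
  have hu₂ := cyclicPrimitive_zero_left θ
  refine ⟨cyclicPrimitive θ, hu₁, hu₂, fun a b c => ?_⟩
  have hquot := (hθ.div (isThreeCocycle_coboundary _)).apply_natCast_eq_one
    (hθ₀.div (isNormalizedThreeCochain_coboundary hu₁ hu₂))
    (fun b c => by simp only [coboundary_cyclicPrimitive_one hθ₀ hN, div_self']) a.val b c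
  rwa [natCast_zmod_val, div_eq_one] at hquot

end Cyclic

section OmegaZeta

variable {k : Type*} [Field k] {M : ℕ} (ζ : kˣ)

theorem omegaZeta_eq_pow_carry (a b c : ZMod M) :
    omegaZeta M ζ a b c = ζ ^ (a.val * ZMod.carry b c) := by
  unfold omegaZeta ZMod.carry
  split_ifs <;> simp

variable [NeZero M]

theorem isNormalizedThreeCochain_omegaZeta : IsNormalizedThreeCochain (omegaZeta M ζ) := by
  rintro a b c (rfl | rfl | rfl) <;> simp [omegaZeta, ZMod.val_lt]

theorem isThreeCocycle_omegaZeta (hζ : ζ ^ M = 1) : IsThreeCocycle (omegaZeta M ζ) := by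
  intro a b c d
  have hab := ZMod.val_add_add_mul_carry a b
  have hcarry := ZMod.carry_add_add_carry b c d
  have hexp : b.val * ZMod.carry c d + a.val * ZMod.carry (b + c) d + a.val * ZMod.carry b c =
      (a + b).val * ZMod.carry c d + a.val * ZMod.carry b (c + d) +
        M * (ZMod.carry a b * ZMod.carry c d) := by
    linear_combination a.val * hcarry - ZMod.carry c d * hab
  simp only [omegaZeta_eq_pow_carry, ← pow_add]
  rw [hexp, pow_add, pow_mul, hζ, one_pow, mul_one]

theorem prod_omegaZeta (a c : ZMod M) : ∏ b, omegaZeta M ζ a b c = ζ ^ (a.val * c.val) := by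
  simp only [omegaZeta_eq_pow_carry, prod_pow_eq_pow_sum, ← mul_sum, ZMod.sum_carry]

theorem prod_omegaZeta_one_one (hζ : ζ ^ M = 1) : ∏ b, omegaZeta M ζ 1 b 1 = ζ := by
  rw [prod_omegaZeta, ZMod.val_one_eq_one_mod, pow_eq_pow_mod _ hζ, ← Nat.mul_mod, one_mul,
    ← pow_eq_pow_mod _ hζ, pow_one]

end OmegaZeta

theorem normalized_three_cocycle_eq_omegaZeta_mul_coboundary_general
    {k : Type*} [Field k]
    (M : ℕ) (hM : 1 ≤ M) (ω : ZMod M → ZMod M → ZMod M → kˣ)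
    (hnorm : ∀ a b c : ZMod M, a = 0 ∨ b = 0 ∨ c = 0 → ω a b c = 1)
    (hcoc : ∀ a b c d : ZMod M,
      ω b c d * ω a (b + c) d * ω a b c = ω (a + b) c d * ω a b (c + d)) :
    ∃! ζ : kˣ, ζ ^ M = 1 ∧
      ∃ u : ZMod M → ZMod M → kˣ,
        (∀ a : ZMod M, u a 0 = 1) ∧ (∀ b : ZMod M, u 0 b = 1) ∧
        (∀ a b c : ZMod M,
          ω a b c = omegaZeta M ζ a b c *
            (u b c * (u (a + b) c)⁻¹ * u a (b + c) * (u a b)⁻¹)) := by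
  have : NeZero M := ⟨by omega⟩
  have hω : IsThreeCocycle ω := hcoc
  have hω₀ : IsNormalizedThreeCochain ω := hnorm
  set ζ := ∏ j, ω 1 j 1
  have hζ : ζ ^ M = 1 := hω.prod_apply_one_pow_card hω₀ 1
  refine ⟨ζ, ⟨hζ, ?_⟩, ?_⟩
  · obtain ⟨u, hu₁, hu₂, hu⟩ := (hω.div (isThreeCocycle_omegaZeta ζ hζ)).exists_eq_coboundary
      (hω₀.div (isNormalizedThreeCochain_omegaZeta ζ))
      (by rw [prod_div_distrib, prod_omegaZeta_one_one ζ hζ, div_self'])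
    exact ⟨u, hu₁, hu₂, fun a b c => div_eq_iff_eq_mul'.1 (hu a b c)⟩
  · rintro ξ ⟨hξ, u, -, -, hu⟩
    calc ξ = ∏ j, omegaZeta M ξ 1 j 1 * coboundary u 1 j 1 := by
          rw [prod_mul_distrib, prod_coboundary, mul_one, prod_omegaZeta_one_one ξ hξ]
      _ = ζ := prod_congr rfl fun j _ => (hu 1 j 1).symm

theorem normalized_three_cocycle_eq_omegaZeta_mul_coboundary
    {k : Type*} [Field k] [IsAlgClosed k] [CharZero k]
    (M : ℕ) (hM : 1 ≤ M) (ω : ZMod M → ZMod M → ZMod M → kˣ)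
    (hnorm : ∀ a b c : ZMod M, a = 0 ∨ b = 0 ∨ c = 0 → ω a b c = 1)
    (hcoc : ∀ a b c d : ZMod M,
      ω b c d * ω a (b + c) d * ω a b c = ω (a + b) c d * ω a b (c + d)) :
    ∃! ζ : kˣ, ζ ^ M = 1 ∧
      ∃ u : ZMod M → ZMod M → kˣ,
        (∀ a : ZMod M, u a 0 = 1) ∧ (∀ b : ZMod M, u 0 b = 1) ∧
        (∀ a b c : ZMod M,
          ω a b c = omegaZeta M ζ a b c *
            (u b c * (u (a + b) c)⁻¹ * u a (b + c) * (u a b)⁻¹)) :=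
  normalized_three_cocycle_eq_omegaZeta_mul_coboundary_general M hM ω hnorm hcoc
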